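/- Suppose x* = √(RNH/p_h) − H and y* = α/p_t − 1/β satisfy the budget constraint x*·p_h + y*·p_t ≤ b. Then (x*, y*) maximizes P(x,y) = RN·x/(H+x) − p_h·x + α·log(1+β·y) − p_t·y over the feasible set {(x,y) : x ≥ 0, y ≥ 0, x·p_h + y·p_t ≤ b}. -/

import Mathlib

set_option maxHeartbeats 1000000 in
theorem stmt_4 (R N H α β b ph pt : ℝ) (hR : 0 < R) (hN : 0 < N) (hH : 0 < H)
    (hα : 0 < α) (hβ : 1 ≤ β) (hb : 0 < b) (hph : 0 < ph) (hpt : 0 < pt)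
    (hphU : ph ≤ R * N / H) (hptU : pt ≤ α * β)
    (hbudget : (Real.sqrt (R * N * H / ph) - H) * ph + (α / pt - 1 / β) * pt ≤ b) :
    ∀ x y : ℝ, 0 ≤ x → 0 ≤ y → x * ph + y * pt ≤ b →
      R * N * x / (H + x) - ph * x + α * Real.log (1 + β * y) - pt * y
        ≤ R * N * (Real.sqrt (R * N * H / ph) - H) / (H + (Real.sqrt (R * N * H / ph) - H))
          - ph * (Real.sqrt (R * N * H / ph) - H)
          + α * Real.log (1 + β * (α / pt - 1 / β))
          - pt * (α / pt - 1 / β) := by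
  intro x y hx hy _
  have hβ0 : (0:ℝ) < β := lt_of_lt_of_le one_pos hβ
  set s := Real.sqrt (R * N * H / ph) with hsdef
  have hpos : 0 < R * N * H / ph := by positivity
  have hs : 0 < s := Real.sqrt_pos.mpr hpos
  have hs2 : s ^ 2 = R * N * H / ph := Real.sq_sqrt hpos.le
  have hs2' : s ^ 2 * ph = R * N * H := by
    field_simp at hs2; linarith [hs2]
  have hHs : H + (s - H) = s := by ring
  rw [hHs]
  -- x part
  have hx1 : R * N * x / (H + x) - ph * x ≤ R * N * (s - H) / s - ph * (s - H) := by
    have ht : 0 < H + x := by linarith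
    have e1 : R * N * x / (H + x) = R * N - R * N * H / (H + x) := by field_simp; ring
    have e2 : R * N * (s - H) / s = R * N - R * N * H / s := by field_simp
    have e3 : R * N * H / s = ph * s := by
      rw [div_eq_iff hs.ne']; nlinarith [hs2']
    rw [e1, e2, e3]
    set a := R * N * H / (H + x) with ha
    have e4 : a * (H + x) = ph * s ^ 2 := by
      rw [ha, div_mul_cancel₀ _ ht.ne']; linarith [hs2']
    nlinarith [mul_nonneg hph.le (sq_nonneg (H + x - s)), e4, ht, hs]
  -- y part
  have h1 : (0:ℝ) < 1 + β * y := by nlinarith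
  have h2 : 1 + β * (α / pt - 1 / β) = α * β / pt := by
    field_simp; ring
  have h3 : (0:ℝ) < α * β / pt := by positivity
  have hlog := Real.log_le_sub_one_of_pos (show 0 < (1 + β * y) / (α * β / pt) by positivity)
  rw [Real.log_div h1.ne' h3.ne'] at hlog
  have hy1 : α * Real.log (1 + β * y) - pt * y
      ≤ α * Real.log (1 + β * (α / pt - 1 / β)) - pt * (α / pt - 1 / β) := by
    rw [h2]
    have hmul : α * (Real.log (1 + β * y) - Real.log (α * β / pt))
        ≤ α * ((1 + β * y) / (α * β / pt) - 1) := by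
      exact mul_le_mul_of_nonneg_left hlog hα.le
    have hdiv : (1 + β * y) / (α * β / pt) = (1 + β * y) * pt / (α * β) := by
      field_simp
    rw [hdiv] at hmul
    have : α * ((1 + β * y) * pt / (α * β) - 1) = pt / β + pt * y - α := by
      field_simp
    rw [this] at hmul
    have hrhs : pt * (α / pt - 1 / β) = α - pt / β := by
      field_simp
    rw [hrhs]
    linarith
  linarith
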